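/- The split equilibrium problem SEP(f,g,C,Q) is Levitin–Polyak well-posed by perturbations in the generalized sense if and only if its solution set S is nonempty and compact and the Hausdorff distance H(S(ε), S) → 0 as ε → 0⁺. -/

import Mathlib

open Filter Metric Topology Set

/-- The solution set of the split equilibrium problem SEP(f,g,C,Q). -/
def SEPSol {E₁ E₂ : Type*} [NormedAddCommGroup E₁] [NormedSpace ℝ E₁]
    [NormedAddCommGroup E₂] [NormedSpace ℝ E₂]
    (C : Set E₁) (Q : Set E₂) (A : E₁ →L[ℝ] E₂)
    (f : E₁ → E₁ → ℝ) (g : E₂ → E₂ → ℝ) : Set (E₁ × E₂) :=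
  {u | u.1 ∈ C ∧ u.2 ∈ Q ∧ u.2 = A u.1 ∧
    (∀ x ∈ C, 0 ≤ f u.1 x) ∧ (∀ y ∈ Q, 0 ≤ g u.2 y)}

/-- The approximate solution set S(ε) of the perturbed split equilibrium problem,
where the perturbation parameter ranges over the closed ball M of radius `r`
centered at `pstar`, intersected with the closed ball of radius `ε` around `pstar`. -/
def approxSol {E₁ E₂ N : Type*} [NormedAddCommGroup E₁] [NormedSpace ℝ E₁]
    [NormedAddCommGroup E₂] [NormedSpace ℝ E₂] [NormedAddCommGroup N] [NormedSpace ℝ N]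
    (C : Set E₁) (Q : Set E₂) (A : E₁ →L[ℝ] E₂) (pstar : N) (r : ℝ)
    (ft : N → E₁ → E₁ → ℝ) (gt : N → E₂ → E₂ → ℝ) (ε : ℝ) : Set (E₁ × E₂) :=
  {u | ∃ p : N, ‖p - pstar‖ ≤ r ∧ ‖p - pstar‖ ≤ ε ∧
    infDist u.1 C ≤ ε ∧ infDist u.2 Q ≤ ε ∧ ‖u.2 - A u.1‖ ≤ ε ∧
    (∀ x ∈ C, -ε ≤ ft p u.1 x) ∧ (∀ y ∈ Q, -ε ≤ gt p u.2 y)}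

/-- `u` is a generalized approximating sequence corresponding to the parameter
sequence `p` (which lies in the ball M of radius `r` around `pstar` and converges
to `pstar`) for the split equilibrium problem. -/
def GenApproxSeq {E₁ E₂ N : Type*} [NormedAddCommGroup E₁] [NormedSpace ℝ E₁]
    [NormedAddCommGroup E₂] [NormedSpace ℝ E₂] [NormedAddCommGroup N] [NormedSpace ℝ N]
    (C : Set E₁) (Q : Set E₂) (A : E₁ →L[ℝ] E₂) (pstar : N) (r : ℝ)
    (ft : N → E₁ → E₁ → ℝ) (gt : N → E₂ → E₂ → ℝ)
    (p : ℕ → N) (u : ℕ → E₁ × E₂) : Prop :=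
  (∀ n, ‖p n - pstar‖ ≤ r) ∧ Tendsto p atTop (nhds pstar) ∧
  ∃ ε : ℕ → ℝ, (∀ n, 0 < ε n) ∧ Tendsto ε atTop (nhds 0) ∧
    ∀ n, infDist (u n).1 C ≤ ε n ∧ infDist (u n).2 Q ≤ ε n ∧
      ‖(u n).2 - A (u n).1‖ ≤ ε n ∧
      (∀ x ∈ C, -(ε n) ≤ ft (p n) (u n).1 x) ∧
      (∀ y ∈ Q, -(ε n) ≤ gt (p n) (u n).2 y)

/-- SEP(f,g,C,Q) is Levitin–Polyak well-posed by perturbations: the solution set is a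
singleton and every generalized approximating sequence converges to the unique solution. -/
def LPWellPosedPerturb {E₁ E₂ N : Type*} [NormedAddCommGroup E₁] [NormedSpace ℝ E₁]
    [NormedAddCommGroup E₂] [NormedSpace ℝ E₂] [NormedAddCommGroup N] [NormedSpace ℝ N]
    (C : Set E₁) (Q : Set E₂) (A : E₁ →L[ℝ] E₂) (pstar : N) (r : ℝ)
    (ft : N → E₁ → E₁ → ℝ) (gt : N → E₂ → E₂ → ℝ) : Prop :=
  ∃ ustar : E₁ × E₂, SEPSol C Q A (ft pstar) (gt pstar) = {ustar} ∧
    ∀ (p : ℕ → N) (u : ℕ → E₁ × E₂), GenApproxSeq C Q A pstar r ft gt p u →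
      Tendsto u atTop (nhds ustar)

/-- SEP(f,g,C,Q) is Levitin–Polyak well-posed by perturbations in the generalized sense:
the solution set is nonempty and every generalized approximating sequence has a
subsequence converging to some solution. -/
def GenLPWellPosedPerturb {E₁ E₂ N : Type*} [NormedAddCommGroup E₁] [NormedSpace ℝ E₁]
    [NormedAddCommGroup E₂] [NormedSpace ℝ E₂] [NormedAddCommGroup N] [NormedSpace ℝ N]
    (C : Set E₁) (Q : Set E₂) (A : E₁ →L[ℝ] E₂) (pstar : N) (r : ℝ)
    (ft : N → E₁ → E₁ → ℝ) (gt : N → E₂ → E₂ → ℝ) : Prop :=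
  (SEPSol C Q A (ft pstar) (gt pstar)).Nonempty ∧
    ∀ (p : ℕ → N) (u : ℕ → E₁ × E₂), GenApproxSeq C Q A pstar r ft gt p u →
      ∃ ustar ∈ SEPSol C Q A (ft pstar) (gt pstar), ∃ φ : ℕ → ℕ, StrictMono φ ∧
        Tendsto (u ∘ φ) atTop (nhds ustar)

/-- The Kuratowski measure of noncompactness: the infimum of all `ε > 0` such that the
set can be covered by finitely many sets, each of diameter `< ε`. -/
noncomputable def kuratowskiMNC {X : Type*} [PseudoEMetricSpace X] (s : Set X) : ENNReal :=
  sInf {ε : ENNReal | 0 < ε ∧ ∃ t : Finset (Set X), (s ⊆ ⋃ a ∈ t, (a : Set X)) ∧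
    ∀ a ∈ t, EMetric.diam a < ε}

/-! The approximate solution sets satisfy `S ⊆ S(ε)` for `ε ≥ 0`, and generalized approximating
sequences are, up to the choice of parameters, the sequences with `uₙ ∈ S(ηₙ)` for some
`ηₙ → 0⁺`. So well-posedness says that every such sequence subconverges into `S`. Applied to
sequences in `S` this gives sequential compactness of `S`; applied to sequences `uₙ ∈ S(ηₙ)`
staying at distance `> δ` from `S` it gives `H(S(η), S) → 0`, since `S ⊆ S(η)` reduces the
Hausdorff distance to the excess of `S(η)` over `S`. Conversely, `H(S(ηₙ), S) → 0` forces
`d(uₙ, S) → 0`, and nearest points of the compact set `S` have a convergent subsequence. -/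

section SubseqConvergence

variable {X : Type*} [PseudoEMetricSpace X]

theorem Filter.Tendsto.congr_edist {ι : Type*} {l : Filter ι} {f g : ι → X} {a : X}
    (hf : Tendsto f l (𝓝 a)) (h : Tendsto (fun i => EDist.edist (f i) (g i)) l (𝓝 0)) :
    Tendsto g l (𝓝 a) :=
  hf.congr_uniformity <| uniformity_basis_edist.tendsto_right_iff.2 fun _ hε =>
    h.eventually (gt_mem_nhds hε)

theorem IsCompact.exists_subseq_tendsto_of_infEDist_tendsto_zero {S : Set X} {u : ℕ → X}
    (hS : IsCompact S) (hne : S.Nonempty)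
    (hu : Tendsto (fun n => infEDist (u n) S) atTop (𝓝 0)) :
    ∃ x ∈ S, ∃ φ : ℕ → ℕ, StrictMono φ ∧ Tendsto (u ∘ φ) atTop (𝓝 x) := by
  choose v hvS hv using fun n => hS.exists_infEDist_eq_edist hne (u n)
  obtain ⟨x, hxS, φ, hφ, hvx⟩ := hS.tendsto_subseq hvS
  refine ⟨x, hxS, φ, hφ, hvx.congr_edist ?_⟩
  simp only [Function.comp_apply, edist_comm (v _), ← hv]
  exact hu.comp hφ.tendsto_atTop

def SubseqConvergesInto (T : ℝ → Set X) (S : Set X) : Prop :=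
  ∀ (η : ℕ → ℝ) (u : ℕ → X), (∀ n, 0 < η n) → Tendsto η atTop (𝓝 0) → (∀ n, u n ∈ T (η n)) →
    ∃ x ∈ S, ∃ φ : ℕ → ℕ, StrictMono φ ∧ Tendsto (u ∘ φ) atTop (𝓝 x)

variable {T : ℝ → Set X} {S : Set X}

theorem SubseqConvergesInto.isCompact (h : SubseqConvergesInto T S) (hST : ∀ η > 0, S ⊆ T η) :
    IsCompact S := by
  refine IsSeqCompact.isCompact fun u hu => ?_
  have hpos (n : ℕ) : (0 : ℝ) < 1 / (n + 1) := Nat.one_div_pos_of_nat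
  exact h _ u hpos tendsto_one_div_add_atTop_nhds_zero_nat fun n => hST _ (hpos n) (hu n)

theorem SubseqConvergesInto.tendsto_hausdorffEDist (h : SubseqConvergesInto T S)
    (hST : ∀ η > 0, S ⊆ T η) :
    Tendsto (fun η => hausdorffEDist (T η) S) (𝓝[>] 0) (𝓝 0) := by
  rw [ENNReal.tendsto_nhds_zero]
  intro δ hδ
  by_contra hnot
  have hfreq : ∃ᶠ η in 𝓝[>] (0 : ℝ), ∃ v ∈ T η, δ < infEDist v S := by
    refine ((not_eventually.1 hnot).and_eventually self_mem_nhdsWithin).mono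
      fun η ⟨hη, hηpos⟩ => ?_
    by_contra! hnear
    exact hη (hausdorffEDist_le_of_infEDist hnear fun y hy => by
      rw [infEDist_zero_of_mem (hST η hηpos hy)]
      exact zero_le)
  have hη (n : ℕ) : ∃ η ∈ Ioo (0 : ℝ) (1 / (n + 1)), ∃ v ∈ T η, δ < infEDist v S :=
    (hfreq.and_eventually (Ioo_mem_nhdsGT Nat.one_div_pos_of_nat)).exists.imp
      fun _ ⟨hv, hsmall⟩ => ⟨hsmall, hv⟩
  choose η hηIoo u huT hufar using hη
  have hη0 : Tendsto η atTop (𝓝 0) :=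
    tendsto_of_tendsto_of_tendsto_of_le_of_le tendsto_const_nhds
      tendsto_one_div_add_atTop_nhds_zero_nat (fun n => (hηIoo n).1.le) fun n => (hηIoo n).2.le
  obtain ⟨x, hxS, φ, -, hux⟩ := h η u (fun n => (hηIoo n).1) hη0 huT
  obtain ⟨n, hn⟩ := (EMetric.tendsto_nhds.1 hux δ hδ).exists
  exact (hufar (φ n)).not_ge ((infEDist_le_edist_of_mem hxS).trans hn.le)

theorem subseqConvergesInto_of_tendsto_hausdorffEDist (hS : IsCompact S) (hne : S.Nonempty)
    (hT : Tendsto (fun η => hausdorffEDist (T η) S) (𝓝[>] 0) (𝓝 0)) :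
    SubseqConvergesInto T S := by
  intro η u hηpos hη0 huT
  have hη : Tendsto η atTop (𝓝[>] 0) :=
    tendsto_nhdsWithin_iff.2 ⟨hη0, .of_forall hηpos⟩
  refine hS.exists_subseq_tendsto_of_infEDist_tendsto_zero hne ?_
  exact tendsto_of_tendsto_of_tendsto_of_le_of_le tendsto_const_nhds (hT.comp hη)
    (fun _ => zero_le) fun n => infEDist_le_hausdorffEDist_of_mem (huT n)

theorem subseqConvergesInto_iff_tendsto_hausdorffEDist (hST : ∀ η > 0, S ⊆ T η) :
    S.Nonempty ∧ SubseqConvergesInto T S ↔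
      S.Nonempty ∧ IsCompact S ∧ Tendsto (fun η => hausdorffEDist (T η) S) (𝓝[>] 0) (𝓝 0) :=
  ⟨fun ⟨hne, h⟩ => ⟨hne, h.isCompact hST, h.tendsto_hausdorffEDist hST⟩,
    fun ⟨hne, hS, hT⟩ => ⟨hne, subseqConvergesInto_of_tendsto_hausdorffEDist hS hne hT⟩⟩

end SubseqConvergence

section SplitEquilibrium

variable {E₁ E₂ N : Type*} [NormedAddCommGroup E₁] [NormedSpace ℝ E₁]
    [NormedAddCommGroup E₂] [NormedSpace ℝ E₂] [NormedAddCommGroup N] [NormedSpace ℝ N]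
    {C : Set E₁} {Q : Set E₂} {A : E₁ →L[ℝ] E₂} {pstar : N} {r : ℝ}
    {ft : N → E₁ → E₁ → ℝ} {gt : N → E₂ → E₂ → ℝ}

theorem sepSol_subset_approxSol (hr : 0 ≤ r) {ε : ℝ} (hε : 0 ≤ ε) :
    SEPSol C Q A (ft pstar) (gt pstar) ⊆ approxSol C Q A pstar r ft gt ε := by
  rintro u ⟨hC, hQ, hA, hf, hg⟩
  refine ⟨pstar, by simpa using hr, by simpa using hε, (infDist_zero_of_mem hC).trans_le hε,
    (infDist_zero_of_mem hQ).trans_le hε, by simpa [hA] using hε,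
    fun x hx => (neg_nonpos.2 hε).trans (hf x hx), fun y hy => (neg_nonpos.2 hε).trans (hg y hy)⟩

theorem GenApproxSeq.exists_mem_approxSol {p : ℕ → N} {u : ℕ → E₁ × E₂}
    (h : GenApproxSeq C Q A pstar r ft gt p u) :
    ∃ η : ℕ → ℝ, (∀ n, 0 < η n) ∧ Tendsto η atTop (𝓝 0) ∧
      ∀ n, u n ∈ approxSol C Q A pstar r ft gt (η n) := by
  obtain ⟨hpr, hp, ε, hεpos, hε0, hu⟩ := h
  refine ⟨fun n => max (ε n) ‖p n - pstar‖, fun n => lt_max_of_lt_left (hεpos n), ?_, fun n => ?_⟩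
  · simpa using hε0.max (tendsto_iff_norm_sub_tendsto_zero.1 hp)
  obtain ⟨hC, hQ, hA, hf, hg⟩ := hu n
  have hε : ε n ≤ max (ε n) ‖p n - pstar‖ := le_max_left _ _
  exact ⟨p n, hpr n, le_max_right _ _, hC.trans hε, hQ.trans hε, hA.trans hε,
    fun x hx => (neg_le_neg hε).trans (hf x hx), fun y hy => (neg_le_neg hε).trans (hg y hy)⟩

theorem exists_genApproxSeq_of_mem_approxSol {η : ℕ → ℝ} {u : ℕ → E₁ × E₂}
    (hηpos : ∀ n, 0 < η n) (hη0 : Tendsto η atTop (𝓝 0))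
    (hu : ∀ n, u n ∈ approxSol C Q A pstar r ft gt (η n)) :
    ∃ p, GenApproxSeq C Q A pstar r ft gt p u := by
  choose p hpr hpη hC hQ hA hf hg using hu
  refine ⟨p, hpr, ?_, η, hηpos, hη0, fun n => ⟨hC n, hQ n, hA n, hf n, hg n⟩⟩
  exact tendsto_iff_norm_sub_tendsto_zero.2 <|
    squeeze_zero (fun _ => norm_nonneg _) hpη hη0

theorem genLPWellPosedPerturb_iff_subseqConvergesInto :
    GenLPWellPosedPerturb C Q A pstar r ft gt ↔ (SEPSol C Q A (ft pstar) (gt pstar)).Nonempty ∧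
      SubseqConvergesInto (approxSol C Q A pstar r ft gt) (SEPSol C Q A (ft pstar) (gt pstar)) := by
  refine and_congr_right fun _ => ⟨fun h η u hηpos hη0 hu => ?_, fun h p u hu => ?_⟩
  · obtain ⟨p, hp⟩ := exists_genApproxSeq_of_mem_approxSol hηpos hη0 hu
    exact h p u hp
  · obtain ⟨η, hηpos, hη0, hη⟩ := hu.exists_mem_approxSol
    exact h η u hηpos hη0 hη

end SplitEquilibrium

theorem sep_gen_lp_wellposed_iff_hausdorff_tendsto_zero_general
    {E₁ E₂ N : Type*} [NormedAddCommGroup E₁] [NormedSpace ℝ E₁]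
    [NormedAddCommGroup E₂] [NormedSpace ℝ E₂]
    [NormedAddCommGroup N] [NormedSpace ℝ N]
    (C : Set E₁) (Q : Set E₂)
    (A : E₁ →L[ℝ] E₂) (pstar : N) (r : ℝ) (hr : 0 < r)
    (ftil : N → E₁ → E₁ → ℝ) (gtil : N → E₂ → E₂ → ℝ) :
    GenLPWellPosedPerturb C Q A pstar r ftil gtil ↔
      (SEPSol C Q A (ftil pstar) (gtil pstar)).Nonempty ∧
        IsCompact (SEPSol C Q A (ftil pstar) (gtil pstar)) ∧
        Tendsto (fun ε : ℝ => EMetric.hausdorffEdist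
            (approxSol C Q A pstar r ftil gtil ε) (SEPSol C Q A (ftil pstar) (gtil pstar)))
          (𝓝[>] (0 : ℝ)) (nhds 0) := by
  rw [genLPWellPosedPerturb_iff_subseqConvergesInto]
  exact subseqConvergesInto_iff_tendsto_hausdorffEDist fun _ hη =>
    sepSol_subset_approxSol hr.le hη.le

/-- **Theorem 4.3.** SEP(f,g,C,Q) is Levitin–Polyak well-posed by perturbations in the
generalized sense if and only if its solution set S is nonempty and compact and
H(S(ε), S) → 0 as ε → 0⁺. -/
theorem sep_gen_lp_wellposed_iff_hausdorff_tendsto_zero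
    {E₁ E₂ N : Type*} [NormedAddCommGroup E₁] [NormedSpace ℝ E₁] [CompleteSpace E₁]
    [NormedAddCommGroup E₂] [NormedSpace ℝ E₂] [CompleteSpace E₂]
    [NormedAddCommGroup N] [NormedSpace ℝ N]
    (C : Set E₁) (Q : Set E₂) (hCne : C.Nonempty) (hCcl : IsClosed C) (hCcv : Convex ℝ C)
    (hQne : Q.Nonempty) (hQcl : IsClosed Q) (hQcv : Convex ℝ Q)
    (A : E₁ →L[ℝ] E₂) (pstar : N) (r : ℝ) (hr : 0 < r)
    (ftil : N → E₁ → E₁ → ℝ) (gtil : N → E₂ → E₂ → ℝ) :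
    GenLPWellPosedPerturb C Q A pstar r ftil gtil ↔
      (SEPSol C Q A (ftil pstar) (gtil pstar)).Nonempty ∧
        IsCompact (SEPSol C Q A (ftil pstar) (gtil pstar)) ∧
        Tendsto (fun ε : ℝ => EMetric.hausdorffEdist
            (approxSol C Q A pstar r ftil gtil ε) (SEPSol C Q A (ftil pstar) (gtil pstar)))
          (𝓝[>] (0 : ℝ)) (nhds 0) :=
  sep_gen_lp_wellposed_iff_hausdorff_tendsto_zero_general C Q A pstar r hr ftil gtil
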